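/- arXiv:2109.14367 — 4 statements merged into one kernel-verified Lean document; each statement's English description precedes it below -/
import Mathlib

section
/- Let $s \in \mathbb{N}$ and $\nu \in \mathbb{N}_0^s$ be a multi-index. Then $\sum_{m \le \nu} \binom{\nu}{m}\, |m|!\, |\nu - m|! = (|\nu| + 1)!$, where the sum is over all multi-indices $m \in \mathbb{N}_0^s$ with $m_j \le \nu_j$ for all $j$. -/
open Polynomial Finset

lemma poly_identity (s : ℕ) (ν : Fin s → ℕ) :
    ∑ m ∈ Finset.Iic ν, (C (∏ j, Nat.choose (ν j) (m j)) : ℕ[X]) * X ^ (∑ j, m j)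
      = (X + 1) ^ (∑ j, ν j) := by
  have hIic : Finset.Iic ν = Fintype.piFinset fun j => Finset.Iic (ν j) := by
    ext m; simp [Pi.le_def]
  rw [hIic, ← Finset.prod_pow_eq_pow_sum]
  have : ∀ j : Fin s, ((X + 1 : ℕ[X]) ^ (ν j))
      = ∑ i ∈ Finset.Iic (ν j), C ((ν j).choose i) * X ^ i := by
    intro j
    ext k
    simp only [coeff_X_add_one_pow, finset_sum_coeff, coeff_C_mul, coeff_X_pow]
    rw [Finset.sum_eq_single k] <;> simp +contextual [Nat.choose_eq_zero_of_lt, Nat.lt_succ_iff]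
    intro h; omega
  simp_rw [this]
  rw [Finset.prod_univ_sum]
  refine Finset.sum_congr rfl fun m _ => ?_
  rw [Finset.prod_mul_distrib, Finset.prod_pow_eq_pow_sum, map_prod]

lemma fiber_count (s : ℕ) (ν : Fin s → ℕ) (k : ℕ) :
    ∑ m ∈ (Finset.Iic ν).filter (fun m => ∑ j, m j = k), (∏ j, Nat.choose (ν j) (m j))
      = (∑ j, ν j).choose k := by
  have := congrArg (fun p : ℕ[X] => p.coeff k) (poly_identity s ν)
  simp only [finset_sum_coeff, coeff_C_mul, coeff_X_pow, coeff_X_add_one_pow,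
    Nat.cast_id, mul_ite, mul_one, mul_zero] at this
  rw [Finset.sum_filter, ← this]
  refine Finset.sum_congr rfl fun m _ => ?_
  by_cases h : k = ∑ j, m j <;> simp [h, eq_comm]

/-- Multi-index combinatorial identity (equation (9.4) of Kuo–Schwab–Sloan):
`∑_{m ≤ ν} (ν choose m) * |m|! * |ν - m|! = (|ν| + 1)!`, where the sum is over
all multi-indices `m : Fin s → ℕ` with `m j ≤ ν j` for all `j`. -/
theorem sum_multichoose_factorial (s : ℕ) (ν : Fin s → ℕ) :
    ∑ m ∈ Finset.Iic ν,
        (∏ j, Nat.choose (ν j) (m j)) * Nat.factorial (∑ j, m j) *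
          Nat.factorial (∑ j, (ν j - m j))
      = Nat.factorial ((∑ j, ν j) + 1) := by
  set N := ∑ j, ν j with hN
  have key : ∀ m ∈ Finset.Iic ν,
      (∏ j, Nat.choose (ν j) (m j)) * Nat.factorial (∑ j, m j) *
          Nat.factorial (∑ j, (ν j - m j))
        = (∏ j, Nat.choose (ν j) (m j)) * (Nat.factorial (∑ j, m j) *
            Nat.factorial (N - ∑ j, m j)) := by
    intro m hm
    rw [Finset.mem_Iic] at hm
    have h1 : (∑ j, (ν j - m j)) + ∑ j, m j = N := by
      rw [← Finset.sum_add_distrib]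
      exact Finset.sum_congr rfl fun j _ => Nat.sub_add_cancel (hm j)
    have h2 : ∑ j, (ν j - m j) = N - ∑ j, m j := by omega
    rw [h2, mul_assoc]
  rw [Finset.sum_congr rfl key]
  have hmaps : ∀ m ∈ Finset.Iic ν, (∑ j, m j) ∈ Finset.range (N + 1) := by
    intro m hm
    rw [Finset.mem_Iic] at hm
    rw [Finset.mem_range, Nat.lt_succ_iff]
    exact Finset.sum_le_sum fun j _ => hm j
  rw [← Finset.sum_fiberwise_of_maps_to hmaps]
  have : ∀ k ∈ Finset.range (N + 1),
      ∑ m ∈ (Finset.Iic ν).filter (fun m => ∑ j, m j = k),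
        (∏ j, Nat.choose (ν j) (m j)) * (Nat.factorial (∑ j, m j) *
          Nat.factorial (N - ∑ j, m j))
      = N.choose k * (Nat.factorial k * Nat.factorial (N - k)) := by
    intro k _
    rw [← fiber_count s ν k, Finset.sum_mul]
    refine Finset.sum_congr rfl fun m hm => ?_
    rw [Finset.mem_filter] at hm
    rw [hm.2]
  rw [Finset.sum_congr rfl this]
  have : ∀ k ∈ Finset.range (N + 1),
      N.choose k * (Nat.factorial k * Nat.factorial (N - k)) = Nat.factorial N := by
    intro k hk
    rw [Finset.mem_range, Nat.lt_succ_iff] at hk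
    rw [← mul_assoc, Nat.choose_mul_factorial_mul_factorial hk]
  rw [Finset.sum_congr rfl this, Finset.sum_const, Finset.card_range, smul_eq_mul,
    Nat.factorial_succ]
end

section
/- Let $s \in \mathbb{N}$ and $\nu \in \mathbb{N}_0^s$ be a multi-index. Then $\sum_{m \le \nu} \binom{\nu}{m}\, \frac{|m|!}{(\ln 2)^{|m|}} \le 2\, \frac{|\nu|!}{(\ln 2)^{|\nu|}}$, where the sum is over all multi-indices $m \in \mathbb{N}_0^s$ with $m_j \le \nu_j$ for all $j$. -/
/-!
Expanding `∏ⱼ (X + 1) ^ νⱼ = (X + 1) ^ |ν|` and comparing coefficients shows that the multi-index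
binomial coefficients `(ν choose m)` with `|m| = k` add up to `(|ν| choose k)`, so the sum collapses
to `∑_{k ≤ n} (n choose k) k! / L^k` with `n = |ν|`, `L = ln 2`. This equals
`n! / L^n · ∑_{i ≤ n} L^i / i!`, and the last sum is at most `exp L = 2`.
-/

open Finset Nat Polynomial

section MultiVandermonde

variable {ι : Type*} [Fintype ι] [DecidableEq ι]

theorem Finset.Iic_eq_piFinset_Iic {α : ι → Type*} [∀ i, DecidableEq (α i)]
    [∀ i, PartialOrder (α i)] [∀ i, LocallyFiniteOrderBot (α i)] (b : ∀ i, α i) :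
    Iic b = Fintype.piFinset fun i => Iic (b i) :=
  rfl

theorem sum_Iic_prod_choose_mul_pow {R : Type*} [CommSemiring R] (x : R) (ν : ι → ℕ) :
    ∑ m ∈ Iic ν, (∏ j, ((ν j).choose (m j) : R)) * x ^ (∑ j, m j) = (x + 1) ^ ∑ j, ν j := by
  simp_rw [← prod_pow_eq_pow_sum, add_pow, one_pow, mul_one, range_succ_eq_Iic,
    prod_univ_sum, Finset.Iic_eq_piFinset_Iic, ← prod_mul_distrib, mul_comm]

theorem sum_Iic_filter_sum_eq_prod_choose (ν : ι → ℕ) (k : ℕ) :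
    ∑ m ∈ Iic ν with ∑ j, m j = k, ∏ j, (ν j).choose (m j) = (∑ j, ν j).choose k := by
  have := congrArg (coeff · k) (sum_Iic_prod_choose_mul_pow (X : ℕ[X]) ν)
  simp only [finsetSum_coeff, ← Nat.cast_prod, coeff_natCast_mul, coeff_X_pow,
    coeff_X_add_one_pow, Nat.cast_id, mul_ite, mul_one, mul_zero] at this
  rw [sum_filter, ← this]
  simp_rw [eq_comm]

theorem sum_Iic_prod_choose_mul_apply_sum {R : Type*} [CommSemiring R] (ν : ι → ℕ) (g : ℕ → R) :
    ∑ m ∈ Iic ν, (∏ j, ((ν j).choose (m j) : R)) * g (∑ j, m j)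
      = ∑ k ∈ range (∑ j, ν j + 1), ((∑ j, ν j).choose k : R) * g k := by
  rw [← sum_fiberwise_of_maps_to (g := fun m => ∑ j, m j) (t := range (∑ j, ν j + 1))]
  · refine sum_congr rfl fun k _ => ?_
    rw [← sum_Iic_filter_sum_eq_prod_choose ν k, Nat.cast_sum, sum_mul]
    refine sum_congr rfl fun m hm => ?_
    rw [(mem_filter.mp hm).2, Nat.cast_prod]
  · intro m hm
    exact mem_range_succ_iff.mpr (sum_le_sum fun j _ => mem_Iic.mp hm j)

end MultiVandermonde

theorem choose_mul_factorial_div_pow_eq {x : ℝ} (hx : x ≠ 0) {n k : ℕ} (hkn : k ≤ n) :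
    (n.choose k : ℝ) * (k ! / x ^ k) = n ! / x ^ n * (x ^ (n - k) / (n - k)!) := by
  rw [cast_choose ℝ hkn, ← pow_sub_mul_pow x hkn]
  field_simp

theorem sum_choose_mul_factorial_div_pow_le_exp_mul {x : ℝ} (hx : 0 < x) (n : ℕ) :
    ∑ k ∈ range (n + 1), (n.choose k : ℝ) * (k ! / x ^ k) ≤ Real.exp x * (n ! / x ^ n) :=
  calc ∑ k ∈ range (n + 1), (n.choose k : ℝ) * (k ! / x ^ k)
      = n ! / x ^ n * ∑ k ∈ range (n + 1), x ^ (n - k) / (n - k)! := by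
        rw [mul_sum]
        exact sum_congr rfl fun k hk =>
          choose_mul_factorial_div_pow_eq hx.ne' (mem_range_succ_iff.mp hk)
    _ = n ! / x ^ n * ∑ i ∈ range (n + 1), x ^ i / i ! := by
        rw [← sum_range_reflect (fun i => x ^ i / (i ! : ℝ))]
        simp
    _ ≤ n ! / x ^ n * Real.exp x := by
        gcongr
        exact Real.sum_le_exp_of_nonneg hx.le _
    _ = Real.exp x * (n ! / x ^ n) := mul_comm _ _

/-- Multi-index estimate (equation for `∑_{m ≤ ν} (ν choose m) |m|!/(ln 2)^{|m|}`):
`∑_{m ≤ ν} (ν choose m) * |m|! / (ln 2)^{|m|} ≤ 2 * |ν|! / (ln 2)^{|ν|}`,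
where the sum is over all multi-indices `m : Fin s → ℕ` with `m ≤ ν`. -/
theorem sum_multichoose_factorial_log2_le (s : ℕ) (ν : Fin s → ℕ) :
    ∑ m ∈ Finset.Iic ν,
        (∏ j, (Nat.choose (ν j) (m j) : ℝ)) *
          (Nat.factorial (∑ j, m j) : ℝ) / Real.log 2 ^ (∑ j, m j)
      ≤ 2 * (Nat.factorial (∑ j, ν j) : ℝ) / Real.log 2 ^ (∑ j, ν j) := by
  set L := Real.log 2
  set n := ∑ j, ν j
  calc ∑ m ∈ Iic ν, (∏ j, ((ν j).choose (m j) : ℝ)) * ((∑ j, m j)! : ℝ) / L ^ (∑ j, m j)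
      = ∑ m ∈ Iic ν, (∏ j, ((ν j).choose (m j) : ℝ)) * ((∑ j, m j)! / L ^ (∑ j, m j)) := by
        simp_rw [mul_div_assoc]
    _ = ∑ k ∈ range (n + 1), (n.choose k : ℝ) * (k ! / L ^ k) :=
        sum_Iic_prod_choose_mul_apply_sum ν fun k => (k ! : ℝ) / L ^ k
    _ ≤ Real.exp L * (n ! / L ^ n) :=
        sum_choose_mul_factorial_div_pow_le_exp_mul (Real.log_pos one_lt_two) n
    _ = 2 * n ! / L ^ n := by rw [Real.exp_log two_pos, mul_div_assoc]
end

section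
/- Let $s \in \mathbb{N}$ and $\nu \in \mathbb{N}_0^s$ be a multi-index. Then $\sum_{m \le \nu} \binom{\nu}{m}\, |m|!\, (|\nu - m| + 1)! = \frac{(|\nu| + 2)!}{2}$, where the sum is over all multi-indices $m \in \mathbb{N}_0^s$ with $m_j \le \nu_j$ for all $j$. -/
open Finset Polynomial

/-- Multi-index Vandermonde: the sum of products of binomial coefficients over
multi-indices `m ≤ ν` with `|m| = k` equals `|ν|.choose k`. -/
lemma pi_vandermonde (s : ℕ) (ν : Fin s → ℕ) (k : ℕ) :
    ∑ m ∈ (Finset.Iic ν).filter (fun m => ∑ j, m j = k),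
        ∏ j, Nat.choose (ν j) (m j) = Nat.choose (∑ j, ν j) k := by
  have hIic : Finset.Iic ν = Fintype.piFinset fun j => Finset.Iic (ν j) := by
    ext m; simp [Fintype.mem_piFinset, Pi.le_def]
  have hpow : ∀ n : ℕ, (X + 1 : ℕ[X]) ^ n
      = ∑ i ∈ Finset.range (n + 1), (C ((n.choose i : ℕ)) : ℕ[X]) * X ^ i := by
    intro n
    rw [add_pow]
    refine Finset.sum_congr rfl fun i _ => ?_
    simp [mul_comm, mul_assoc, mul_left_comm]
  have key : (X + 1 : ℕ[X]) ^ (∑ j, ν j)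
      = ∑ m ∈ Finset.Iic ν, (C (∏ j, Nat.choose (ν j) (m j)) : ℕ[X]) * X ^ (∑ j, m j) := by
    rw [← Finset.prod_pow_eq_pow_sum]
    calc ∏ j, (X + 1 : ℕ[X]) ^ ν j
        = ∏ j, ∑ i ∈ Finset.range (ν j + 1), (C (((ν j).choose i : ℕ)) : ℕ[X]) * X ^ i := by
          exact Finset.prod_congr rfl fun j _ => hpow (ν j)
      _ = ∑ m ∈ Fintype.piFinset fun j => Finset.range (ν j + 1),
            ∏ j, (C (((ν j).choose (m j) : ℕ)) : ℕ[X]) * X ^ (m j) := by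
          rw [Finset.prod_univ_sum]
      _ = ∑ m ∈ Finset.Iic ν, (C (∏ j, Nat.choose (ν j) (m j)) : ℕ[X]) * X ^ (∑ j, m j) := by
          rw [hIic]
          refine Finset.sum_congr ?_ fun m _ => ?_
          · congr 1; ext j; rw [Finset.mem_range, Finset.mem_Iic, Nat.lt_succ_iff]
          · rw [Finset.prod_mul_distrib, Finset.prod_pow_eq_pow_sum, map_prod]
  have hc := congrArg (fun p : ℕ[X] => p.coeff k) key
  simp only [coeff_X_add_one_pow, Nat.cast_id] at hc
  rw [finset_sum_coeff] at hc
  simp only [coeff_C_mul, coeff_X_pow, mul_ite, mul_one, mul_zero] at hc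
  rw [Finset.sum_filter, hc]
  exact Finset.sum_congr rfl fun m _ => by simp only [eq_comm]

/-- Multi-index combinatorial identity (equation (9.5) of Kuo–Schwab–Sloan):
`∑_{m ≤ ν} (ν choose m) * |m|! * (|ν - m| + 1)! = (|ν| + 2)! / 2`, where the
sum is over all multi-indices `m : Fin s → ℕ` with `m ≤ ν` and `ν - m` is the
componentwise difference. -/
theorem sum_multichoose_factorial_succ (s : ℕ) (ν : Fin s → ℕ) :
    ∑ m ∈ Finset.Iic ν,
        (∏ j, (Nat.choose (ν j) (m j) : ℝ)) *
          (Nat.factorial (∑ j, m j) : ℝ) *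
          (Nat.factorial ((∑ j, (ν j - m j)) + 1) : ℝ)
      = (Nat.factorial ((∑ j, ν j) + 2) : ℝ) / 2 := by
  set n := ∑ j, ν j with hn
  -- the natural-number version of the left-hand side
  have hnat : 2 * ∑ m ∈ Finset.Iic ν,
      (∏ j, Nat.choose (ν j) (m j)) * Nat.factorial (∑ j, m j) *
        Nat.factorial ((∑ j, (ν j - m j)) + 1) = Nat.factorial (n + 2) := by
    have hmaps : ∀ m ∈ Finset.Iic ν, (∑ j, m j) ∈ Finset.range (n + 1) := by
      intro m hm
      rw [Finset.mem_range, Nat.lt_succ_iff]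
      exact Finset.sum_le_sum fun j _ => (Finset.mem_Iic.1 hm) j
    have hsub : ∀ m ∈ Finset.Iic ν, (∑ j, (ν j - m j)) = n - ∑ j, m j := by
      intro m hm
      have hle := Finset.mem_Iic.1 hm
      have : (∑ j, (ν j - m j)) + ∑ j, m j = n := by
        rw [← Finset.sum_add_distrib]
        exact Finset.sum_congr rfl fun j _ => Nat.sub_add_cancel (hle j)
      omega
    rw [← Finset.sum_fiberwise_of_maps_to hmaps]
    have hfib : ∀ k ∈ Finset.range (n + 1),
        ∑ m ∈ (Finset.Iic ν).filter (fun m => ∑ j, m j = k),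
            (∏ j, Nat.choose (ν j) (m j)) * Nat.factorial (∑ j, m j) *
              Nat.factorial ((∑ j, (ν j - m j)) + 1)
          = n.choose k * Nat.factorial k * Nat.factorial (n - k + 1) := by
      intro k hk
      rw [← pi_vandermonde s ν k, Finset.sum_mul, Finset.sum_mul]
      refine Finset.sum_congr rfl fun m hm => ?_
      have h1 := (Finset.mem_filter.1 hm).2
      have h2 := hsub m (Finset.mem_filter.1 hm).1
      rw [h1, h2, h1]
    rw [Finset.sum_congr rfl hfib]
    -- now a single-variable identity
    have hterm : ∀ k ∈ Finset.range (n + 1),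
        n.choose k * Nat.factorial k * Nat.factorial (n - k + 1)
          = Nat.factorial n * (n + 1 - k) := by
      intro k hk
      have hk' : k ≤ n := Nat.lt_succ_iff.1 (Finset.mem_range.1 hk)
      have := Nat.choose_mul_factorial_mul_factorial hk'
      calc n.choose k * Nat.factorial k * Nat.factorial (n - k + 1)
          = n.choose k * Nat.factorial k * ((n - k + 1) * Nat.factorial (n - k)) := by
            rw [Nat.factorial_succ]
        _ = (n.choose k * Nat.factorial k * Nat.factorial (n - k)) * (n - k + 1) := by ring
        _ = Nat.factorial n * (n + 1 - k) := by rw [this]; congr 1; omega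
    rw [Finset.sum_congr rfl hterm, ← Finset.mul_sum]
    have hgauss : ∑ k ∈ Finset.range (n + 1), (n + 1 - k) = ∑ k ∈ Finset.range (n + 1), (k + 1) := by
      rw [← Finset.sum_range_reflect (fun k => k + 1) (n + 1)]
      exact Finset.sum_congr rfl fun k hk => by
        have := Finset.mem_range.1 hk; omega
    have hsum2 : 2 * ∑ k ∈ Finset.range (n + 1), (k + 1) = (n + 1) * (n + 2) := by
      have h := Finset.sum_range_id_mul_two (n + 2)
      have hshift : (∑ k ∈ Finset.range (n + 2), k) = ∑ k ∈ Finset.range (n + 1), (k + 1) := by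
        rw [Finset.sum_range_succ', add_zero]
      have h1 : n + 2 - 1 = n + 1 := rfl
      rw [hshift, h1] at h
      calc 2 * ∑ k ∈ Finset.range (n + 1), (k + 1)
          = (∑ k ∈ Finset.range (n + 1), (k + 1)) * 2 := mul_comm _ _
        _ = (n + 2) * (n + 1) := h
        _ = (n + 1) * (n + 2) := mul_comm _ _
    rw [hgauss]
    calc 2 * (Nat.factorial n * ∑ k ∈ Finset.range (n + 1), (k + 1))
        = Nat.factorial n * (2 * ∑ k ∈ Finset.range (n + 1), (k + 1)) := by ring
      _ = Nat.factorial n * ((n + 1) * (n + 2)) := by rw [hsum2]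
      _ = Nat.factorial (n + 2) := by
          rw [Nat.factorial_succ, Nat.factorial_succ]; ring
  -- cast it to the reals
  have hcast : (∑ m ∈ Finset.Iic ν,
      (∏ j, (Nat.choose (ν j) (m j) : ℝ)) * (Nat.factorial (∑ j, m j) : ℝ) *
        (Nat.factorial ((∑ j, (ν j - m j)) + 1) : ℝ))
      = ((∑ m ∈ Finset.Iic ν,
          (∏ j, Nat.choose (ν j) (m j)) * Nat.factorial (∑ j, m j) *
            Nat.factorial ((∑ j, (ν j - m j)) + 1) : ℕ) : ℝ) := by
    push_cast; rfl
  rw [hcast, eq_div_iff (by norm_num : (2 : ℝ) ≠ 0)]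
  norm_cast
  rw [mul_comm]
  exact hnat
end

section
/- Let $p \in (0,1)$, $\tau \ge 0$, and let $(b_j)_{j \ge 1}$ be nonnegative reals such that $\sum_{j=1}^{\infty} b_j^{p}$ converges, with value $B$. Then for every $s \in \mathbb{N}$, $\sum_{\mathfrak{u} \subseteq \{1, \ldots, s\}} \big((|\mathfrak{u}|+2)!\,(|\mathfrak{u}|+6)\big)^{p} \prod_{j \in \mathfrak{u}} \big(\tau\, b_j^{2}\big)^{p/2} \ \le\ \sum_{k=0}^{\infty} \frac{\big((k+2)!\,(k+6)\big)^{p}}{k!}\; \tau^{\frac{p}{2} k}\; B^{k}$, and in particular the left-hand side is bounded uniformly in $s$. -/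
/-!
Grouping the subsets `u ⊆ {1, …, s}` by their size `k`, the sum of `∏_{j ∈ u} w_j` over the
`k`-subsets is an elementary symmetric function, which is at most `(∑_j w_j)^k / k!` (each
`k`-subset occurs `k!` times when `(∑_j w_j)^k` is multiplied out). Here
`w_j = (τ b_j²)^{p/2} = τ^{p/2} b_j^p`, so `∑_j w_j ≤ τ^{p/2} B`, and the left-hand side is
bounded by a partial sum of the nonnegative series on the right. That series converges by the
ratio test: the ratio of consecutive terms is `O((k+1)^{p-1})`, which tends to `0` as `p < 1`.
-/

open Finset Nat Filter Topology

theorem pow_add_mul_pow_le_add_pow {R : Type*} [CommRing R] [LinearOrder R]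
    [IsStrictOrderedRing R] {x y : R} (hx : 0 ≤ x) (hy : 0 ≤ y) (n : ℕ) :
    x ^ (n + 1) + (n + 1) * y * x ^ n ≤ (x + y) ^ (n + 1) := by
  induction n with
  | zero => simp
  | succ n ih =>
    have hrest : 0 ≤ (n + 1) * y ^ 2 * x ^ n := by positivity
    calc x ^ (n + 1 + 1) + ((n + 1 : ℕ) + 1) * y * x ^ (n + 1)
        ≤ (x + y) * (x ^ (n + 1) + (n + 1) * y * x ^ n) := by
          push_cast; linear_combination hrest
      _ ≤ (x + y) * (x + y) ^ (n + 1) := by gcongr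
      _ = (x + y) ^ (n + 1 + 1) := by ring

theorem sum_powersetCard_prod_le_sum_pow_div_factorial {R ι : Type*} [Field R] [LinearOrder R]
    [IsStrictOrderedRing R] [DecidableEq ι] {w : ι → R} {t : Finset ι} (hw : ∀ j ∈ t, 0 ≤ w j)
    (k : ℕ) :
    ∑ u ∈ t.powersetCard k, ∏ j ∈ u, w j ≤ (∑ j ∈ t, w j) ^ k / k ! := by
  induction t using Finset.induction_on generalizing k with
  | empty =>
    cases k with
    | zero => simp
    | succ n => simp [powersetCard_eq_empty.mpr (by simp : #(∅ : Finset ι) < n + 1)]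
  | insert a t ha ih =>
    rw [forall_mem_insert] at hw
    obtain ⟨hwa, hw⟩ := hw
    cases k with
    | zero => simp
    | succ n =>
      have hS : 0 ≤ ∑ j ∈ t, w j := sum_nonneg hw
      have hsplit : ∑ u ∈ (insert a t).powersetCard (n + 1), ∏ j ∈ u, w j
          = ∑ u ∈ t.powersetCard (n + 1), ∏ j ∈ u, w j
            + w a * ∑ u ∈ t.powersetCard n, ∏ j ∈ u, w j := by
        rw [powersetCard_succ_insert ha, sum_union, sum_image, mul_sum]
        · refine congrArg _ (sum_congr rfl fun u hu => prod_insert ?_)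
          exact fun h => ha ((mem_powersetCard.mp hu).1 h)
        · exact fun u hu v hv => insert_erase_invOn.2.injOn
            (notMem_mono (mem_powersetCard.mp hu).1 ha) (notMem_mono (mem_powersetCard.mp hv).1 ha)
        · refine disjoint_left.mpr fun u hu hu' => ha ?_
          obtain ⟨v, -, rfl⟩ := mem_image.mp hu'
          exact (mem_powersetCard.mp hu).1 (mem_insert_self a v)
      calc _ = _ := hsplit
        _ ≤ (∑ j ∈ t, w j) ^ (n + 1) / (n + 1)! + w a * ((∑ j ∈ t, w j) ^ n / n !) := by
          gcongr
          · exact ih hw _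
          · exact ih hw _
        _ = ((∑ j ∈ t, w j) ^ (n + 1) + (n + 1) * w a * (∑ j ∈ t, w j) ^ n) / (n + 1)! := by
          rw [factorial_succ]; push_cast; field_simp
        _ ≤ (∑ j ∈ insert a t, w j) ^ (n + 1) / (n + 1)! := by
          rw [sum_insert ha, add_comm (w a)]
          gcongr
          exact pow_add_mul_pow_le_add_pow hS hwa n

theorem summable_div_factorial_of_succ_le {a : ℕ → ℝ} {p M : ℝ} (hp : p < 1)
    (ha : ∀ k, 0 ≤ a k) (hstep : ∀ k, a (k + 1) ≤ M * ((k : ℝ) + 1) ^ p * a k) :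
    Summable fun k => a k / k ! := by
  have hlim : Tendsto (fun k : ℕ => M * ((k : ℝ) + 1) ^ (p - 1)) atTop (𝓝 0) := by
    have hpow := (tendsto_rpow_neg_atTop (by linarith : 0 < 1 - p)).comp
      (tendsto_atTop_add_const_right atTop 1 tendsto_natCast_atTop_atTop)
    simpa [Function.comp_def] using hpow.const_mul M
  refine summable_of_ratio_norm_eventually_le (r := 1 / 2) (by norm_num) ?_
  filter_upwards [hlim.eventually (ge_mem_nhds (by norm_num : (0 : ℝ) < 1 / 2))] with k hk
  have hk1 : (0 : ℝ) < k + 1 := by positivity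
  rw [Real.norm_of_nonneg (by have := ha (k + 1); positivity),
    Real.norm_of_nonneg (by have := ha k; positivity)]
  calc a (k + 1) / (k + 1)! ≤ M * ((k : ℝ) + 1) ^ p * a k / ((k + 1) * k !) := by
        rw [factorial_succ]; push_cast; gcongr; exact hstep k
    _ = M * ((k : ℝ) + 1) ^ (p - 1) * (a k / k !) := by
        rw [Real.rpow_sub_one hk1.ne']; field_simp
    _ ≤ 1 / 2 * (a k / k !) := by have := ha k; gcongr

theorem sum_powerset_mul_prod_le_tsum {ι : Type*} [DecidableEq ι] {g : ℕ → ℝ}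
    {w : ι → ℝ} {t : Finset ι} {S : ℝ} (hg : ∀ k, 0 ≤ g k) (hw : ∀ j ∈ t, 0 ≤ w j)
    (hS : ∑ j ∈ t, w j ≤ S) (hsum : Summable fun k => g k * S ^ k / k !) :
    ∑ u ∈ t.powerset, g #u * ∏ j ∈ u, w j ≤ ∑' k, g k * S ^ k / k ! := by
  have hW : 0 ≤ ∑ j ∈ t, w j := sum_nonneg hw
  have hS0 : 0 ≤ S := hW.trans hS
  rw [sum_powerset]
  refine le_trans ?_ (hsum.sum_le_tsum (range (#t + 1)) fun k _ => by have := hg k; positivity)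
  gcongr with k
  calc ∑ u ∈ t.powersetCard k, g #u * ∏ j ∈ u, w j
      = g k * ∑ u ∈ t.powersetCard k, ∏ j ∈ u, w j := by
        rw [mul_sum]
        exact sum_congr rfl fun u hu => by rw [(mem_powersetCard.mp hu).2]
    _ ≤ g k * ((∑ j ∈ t, w j) ^ k / k !) := by
        gcongr
        · exact hg k
        · exact sum_powersetCard_prod_le_sum_pow_div_factorial hw k
    _ ≤ g k * S ^ k / k ! := by rw [mul_div_assoc]; have := hg k; gcongr

theorem sum_Icc_le_of_hasSum_succ {f : ℕ → ℝ} {B : ℝ} (hf : ∀ j, 1 ≤ j → 0 ≤ f j)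
    (hB : HasSum (fun j => f (j + 1)) B) (s : ℕ) : ∑ j ∈ Icc 1 s, f j ≤ B := by
  rw [← Ico_add_one_right_eq_Icc, sum_Ico_eq_sum_range, add_tsub_cancel_right]
  simp only [add_comm 1]
  exact sum_le_hasSum _ (fun j _ => hf (j + 1) le_add_self) hB

theorem Real.mul_sq_rpow_div_two {τ x : ℝ} (hτ : 0 ≤ τ) (hx : 0 ≤ x) (p : ℝ) :
    (τ * x ^ 2) ^ (p / 2) = τ ^ (p / 2) * x ^ p := by
  rw [Real.mul_rpow hτ (sq_nonneg x), ← Real.rpow_natCast x 2, ← Real.rpow_mul hx]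
  norm_num [mul_div_cancel₀]

theorem rpow_factorial_mul_succ_le {p : ℝ} (hp : 0 ≤ p) (k : ℕ) :
    (((k + 1 + 2)! * (k + 1 + 6) : ℕ) : ℝ) ^ p
      ≤ 7 ^ p * ((k : ℝ) + 1) ^ p * (((k + 2)! * (k + 6) : ℕ) : ℝ) ^ p := by
  have hnat : (k + 1 + 2)! * (k + 1 + 6) ≤ 7 * (k + 1) * ((k + 2)! * (k + 6)) := by
    calc (k + 1 + 2)! * (k + 1 + 6) = (k + 2)! * ((k + 3) * (k + 7)) := by
          rw [show k + 1 + 2 = (k + 2) + 1 by ring, factorial_succ]; ring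
      _ ≤ (k + 2)! * (7 * (k + 1) * (k + 6)) := Nat.mul_le_mul_left _ (by nlinarith)
      _ = 7 * (k + 1) * ((k + 2)! * (k + 6)) := by ring
  rw [← Real.mul_rpow (by norm_num) (by positivity),
    ← Real.mul_rpow (by positivity) (by positivity)]
  gcongr
  exact_mod_cast hnat

/-- Dimension-independent bound on the weighted sum `S_λ` in the MLQMC
analysis: if `∑_{j ≥ 1} b_j^p` converges with value `B`, `p ∈ (0,1)` and
`τ ≥ 0`, then for every `s`,
`∑_{u ⊆ {1,…,s}} ((|u|+2)!(|u|+6))^p ∏_{j ∈ u} (τ b_j²)^{p/2}`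
is bounded by the convergent series
`∑_k ((k+2)!(k+6))^p τ^{pk/2} B^k / k!`, uniformly in `s`. -/
theorem weight_sum_bounded_uniformly (p τ B : ℝ) (hp0 : 0 < p) (hp1 : p < 1)
    (hτ : 0 ≤ τ) (b : ℕ → ℝ) (hb : ∀ j, 1 ≤ j → 0 ≤ b j)
    (hB : HasSum (fun j : ℕ => b (j + 1) ^ p) B) (s : ℕ) :
    ∑ u ∈ (Finset.Icc 1 s).powerset,
        ((Nat.factorial (u.card + 2) * (u.card + 6) : ℕ) : ℝ) ^ p *
          ∏ j ∈ u, (τ * b j ^ 2) ^ (p / 2)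
      ≤ ∑' k : ℕ,
          ((Nat.factorial (k + 2) * (k + 6) : ℕ) : ℝ) ^ p / (Nat.factorial k : ℝ) *
            τ ^ (p / 2 * k) * B ^ k := by
  set A : ℕ → ℝ := fun k => (((k + 2)! * (k + 6) : ℕ) : ℝ) ^ p
  set C := τ ^ (p / 2) * B
  have hA : ∀ k, 0 ≤ A k := fun k => by positivity
  have hbp : ∀ j, 1 ≤ j → 0 ≤ b j ^ p := fun j hj => by have := hb j hj; positivity
  have hC : 0 ≤ C := mul_nonneg (by positivity) (hB.nonneg fun j => hbp (j + 1) le_add_self)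
  have hw : ∑ j ∈ Icc 1 s, (τ * b j ^ 2) ^ (p / 2) ≤ C := by
    rw [sum_congr rfl fun j hj => Real.mul_sq_rpow_div_two hτ (hb j (mem_Icc.mp hj).1) p,
      ← mul_sum]
    exact mul_le_mul_of_nonneg_left (sum_Icc_le_of_hasSum_succ hbp hB s) (by positivity)
  have hsum : Summable fun k => A k * C ^ k / k ! := by
    refine summable_div_factorial_of_succ_le (M := 7 ^ p * C) hp1
      (fun k => by have := hA k; positivity) fun k => ?_
    calc A (k + 1) * C ^ (k + 1) ≤ 7 ^ p * ((k : ℝ) + 1) ^ p * A k * (C ^ k * C) := by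
          rw [pow_succ]; gcongr; exact rpow_factorial_mul_succ_le hp0.le k
      _ = _ := by ring
  have hterm : ∀ k : ℕ, A k / k ! * τ ^ (p / 2 * k) * B ^ k = A k * C ^ k / k ! := fun k => by
    rw [Real.rpow_mul hτ, Real.rpow_natCast, mul_pow]; ring
  calc _ ≤ ∑' k, A k * C ^ k / k ! :=
        sum_powerset_mul_prod_le_tsum hA (fun j _ => by positivity) hw hsum
    _ = _ := tsum_congr fun k => (hterm k).symm
end
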